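/- arXiv:1510.02493 — 2 statements merged into one kernel-verified Lean document; each statement's English description precedes it below -/
import Mathlib

section
/- For any additively idempotent semifield F and any n ≥ 1, the Krull dimension of the Laurent polynomial semiring F(x_1,...,x_n) equals dim F + n. -/
/-- A prime congruence: proper, and twisted products in P force a factor in P. -/
def IsPrimeCon {A : Type*} [CommSemiring A] (P : RingCon A) : Prop :=
  (∃ a b : A, ¬ P a b) ∧
    ∀ a₁ a₂ b₁ b₂ : A,
      P (a₁ * b₁ + a₂ * b₂) (a₁ * b₂ + a₂ * b₁) → P a₁ a₂ ∨ P b₁ b₂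

/-- `HasKrullDim A d` : the longest chain of prime congruences of `A` has `d` strict
inclusions. -/
def HasKrullDim (A : Type*) [CommSemiring A] (d : ℕ) : Prop :=
  (∃ c : Fin (d + 1) → RingCon A, StrictMono c ∧ ∀ i, IsPrimeCon (c i)) ∧
    ∀ (m : ℕ) (c : Fin (m + 1) → RingCon A),
      StrictMono c → (∀ i, IsPrimeCon (c i)) → m ≤ d


/-!
In an additively idempotent semiring a congruence `P` is prime exactly when `A ⧸ P` is totally
ordered (by `a ≤ b ↔ a + b = b`) and cancellative.

Lower bound: for a prime `q` of `F` and a monomial order, comparing leading exponents and leading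
coefficients modulo `q` inherits both properties, hence is a prime of `F[ℤⁿ]`. Reading the
lexicographic order through the first `j` coordinates only gives such primes at each level
`j ≤ n`. A chain `q₀ < ⋯ < q_d` at level `n` continues through the levels `n - 1, …, 0` (with the
congruence identifying all nonzero constants), each step strict because `x_j ~ 1` at level `j`
but not at level `j + 1`.

Upper bound: modulo a prime every Laurent polynomial is congruent to a monomial. Along a chain of
primes each step either strictly enlarges the restriction to `F`, or keeps it and then enlarges
the group of exponents `w` with `x^w` congruent to a constant by an element independent of the
earlier ones, because the units of a prime quotient form a torsion-free group. So there are at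
most `dim F` steps of the first kind and at most `n` of the second.
-/

open AddMonoidAlgebra

local notation "deg" => AddMonoidAlgebra.supDegree WithBot.some
local notation "lc" => AddMonoidAlgebra.leadingCoeff WithBot.some

theorem eq_or_eq_of_mul_add_mul_eq {R : Type*} [CommSemiring R]
    (htot : ∀ a b : R, a + b = a ∨ a + b = b)
    (hcancel : ∀ a b t : R, a * t = b * t → a = b ∨ t = 0) {a₁ a₂ b₁ b₂ : R}
    (h : a₁ * b₁ + a₂ * b₂ = a₁ * b₂ + a₂ * b₁) : a₁ = a₂ ∨ b₁ = b₂ := by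
  wlog ha : a₁ + a₂ = a₂ generalizing a₁ a₂
  · have ha' : a₂ + a₁ = a₁ := by rw [add_comm]; exact (htot a₁ a₂).resolve_right ha
    exact (this (by rw [add_comm (a₂ * b₁), ← h, add_comm]) ha').imp Eq.symm id
  wlog hb : b₁ + b₂ = b₂ generalizing b₁ b₂
  · have hb' : b₂ + b₁ = b₁ := by rw [add_comm]; exact (htot b₁ b₂).resolve_right hb
    exact (this h.symm hb').imp id Eq.symm
  by_contra hne
  push Not at hne
  have hidem (x : R) : x + x = x := (htot x x).elim id id
  -- both sides add up to `(a₁ + a₂) * (b₁ + b₂) = a₂ * b₂`, so the right side is `a₂ * b₂`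
  have hR : a₁ * b₂ + a₂ * b₁ = a₂ * b₂ :=
    calc a₁ * b₂ + a₂ * b₁ = (a₁ * b₁ + a₂ * b₂) + (a₁ * b₂ + a₂ * b₁) := by rw [h, hidem]
      _ = (a₁ + a₂) * (b₁ + b₂) := by ring
      _ = a₂ * b₂ := by rw [ha, hb]
  rcases htot (a₁ * b₂) (a₂ * b₁) with h' | h' <;> rw [h'] at hR
  · rcases hcancel _ _ _ hR with h'' | hb₂
    · exact hne.1 h''
    · exact hne.2 (by rw [← hb, hb₂, add_zero])
  · rw [mul_comm a₂, mul_comm a₂] at hR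
    rcases hcancel _ _ _ hR with h'' | ha₂
    · exact hne.2 h''
    · exact hne.1 (by rw [← ha, ha₂, add_zero])

theorem add_eq_zero_iff_of_add_self {M : Type*} [AddCommMonoid M] (hidem : ∀ a : M, a + a = a)
    {a b : M} : a + b = 0 ↔ a = 0 ∧ b = 0 := by
  refine ⟨fun h => ⟨?_, ?_⟩, fun h => by rw [h.1, h.2, add_zero]⟩
  · rw [← add_zero a, ← h, ← add_assoc, hidem, h]
  · rw [← zero_add b, ← h, add_assoc, hidem, h]

theorem RingCon.exists_rel_not_rel_of_lt {R : Type*} [Add R] [Mul R] {c d : RingCon R}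
    (h : c < d) : ∃ a b, d a b ∧ ¬ c a b := by
  by_contra! hcon
  exact h.not_ge fun {a b} hab => hcon a b hab

namespace IsPrimeCon

section CommSemiring

variable {A : Type*} [CommSemiring A] {P : RingCon A}

theorem not_rel_zero_one (hP : IsPrimeCon P) : ¬ P 0 1 := by
  obtain ⟨⟨a, b, hab⟩, -⟩ := hP
  intro h
  have (x : A) : P 0 x := by simpa using P.mul h (P.refl x)
  exact hab (P.trans (P.symm (this a)) (this b))

theorem comap {B : Type*} [CommSemiring B] (hP : IsPrimeCon P) (φ : B →+* A) :
    IsPrimeCon (P.comap φ) := by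
  refine ⟨⟨0, 1, fun h => hP.not_rel_zero_one ?_⟩, fun a₁ a₂ b₁ b₂ h => hP.2 _ _ _ _ ?_⟩
  · simpa using (h : P (φ 0) (φ 1))
  · simpa using (h : P (φ _) (φ _))

theorem rel_or_rel_zero_of_mul_rel_mul (hP : IsPrimeCon P) {a b t : A}
    (h : P (a * t) (b * t)) : P a b ∨ P t 0 :=
  hP.2 a b t 0 (by simpa using h)

theorem rel_add_or_rel_add (hidem : ∀ a : A, a + a = a) (hP : IsPrimeCon P) (a b : A) :
    P (a + b) a ∨ P (a + b) b := by
  refine hP.2 (a + b) a (a + b) b ?_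
  convert P.refl ((a + b) * b + a * (a + b)) using 1
  calc (a + b) * (a + b) + a * b = a * a + b * b + (a * b + a * b + a * b) := by ring
    _ = a * a + b * b + (a * b + a * b) := by rw [hidem, hidem]
    _ = (a + b) * b + a * (a + b) := by ring

theorem of_total_of_cancel (h01 : ¬ P 0 1) (htot : ∀ a b, P (a + b) a ∨ P (a + b) b)
    (hcancel : ∀ a b t, P (a * t) (b * t) → P a b ∨ P t 0) : IsPrimeCon P := by
  refine ⟨⟨0, 1, h01⟩, fun a₁ a₂ b₁ b₂ h => ?_⟩
  have key := eq_or_eq_of_mul_add_mul_eq (R := P.Quotient)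
    (by
      intro x y
      obtain ⟨a, rfl⟩ := P.mk'_surjective x
      obtain ⟨b, rfl⟩ := P.mk'_surjective y
      simpa only [RingCon.coe_mk', ← RingCon.coe_add, RingCon.eq] using htot a b)
    (by
      intro x y s
      obtain ⟨a, rfl⟩ := P.mk'_surjective x
      obtain ⟨b, rfl⟩ := P.mk'_surjective y
      obtain ⟨t, rfl⟩ := P.mk'_surjective s
      simpa only [RingCon.coe_mk', ← RingCon.coe_mul, ← RingCon.coe_zero, RingCon.eq]
        using hcancel a b t)
    (a₁ := a₁) (a₂ := a₂) (b₁ := b₁) (b₂ := b₂)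
    (by simpa only [← RingCon.coe_mul, ← RingCon.coe_add, RingCon.eq] using h)
  simpa only [RingCon.eq] using key

theorem rel_one_of_pow_rel_one (hidem : ∀ a : A, a + a = a) (hP : IsPrimeCon P) {y : A} {m : ℕ}
    (hm : m ≠ 0) (h : P (y ^ m) 1) : P y 1 := by
  obtain ⟨k, rfl⟩ := Nat.exists_eq_succ_of_ne_zero hm
  set s := ∑ i ∈ Finset.range k, y ^ i
  -- `T = y * s + 1 = 1 + y + ⋯ + y ^ k` satisfies `y * T ~ T`, and `T ≁ 0` since `T + 1 = T`
  have hT : P (y * (y * s + 1)) (1 * (y * s + 1)) := by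
    convert P.add h (P.refl (y * s)) using 1
    · rw [← geom_sum_succ, geom_sum_succ', mul_add, pow_succ']
    · rw [one_mul, add_comm]
  refine (hP.rel_or_rel_zero_of_mul_rel_mul hT).resolve_right fun h0 => hP.not_rel_zero_one ?_
  have h1 : P (y * s + 1) (0 + 1) := by simpa [add_assoc, hidem] using P.add h0 (P.refl 1)
  exact P.trans (P.symm h0) (by simpa using h1)

end CommSemiring

variable {F : Type*} [Semifield F] {q : RingCon F}

theorem eq_zero_of_rel_zero (hq : IsPrimeCon q) {a : F} (h : q a 0) : a = 0 := by
  by_contra ha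
  exact hq.not_rel_zero_one (q.symm (by simpa [ha] using q.mul h (q.refl a⁻¹)))

theorem eq_zero_iff_of_rel (hq : IsPrimeCon q) {a b : F} (h : q a b) : a = 0 ↔ b = 0 :=
  ⟨fun ha => hq.eq_zero_of_rel_zero (q.symm (ha ▸ h)), fun hb => hq.eq_zero_of_rel_zero (hb ▸ h)⟩

end IsPrimeCon

namespace AddMonoidAlgebra

section LinearOrder

variable {R Γ : Type*} [Semiring R] [LinearOrder Γ] {f g : AddMonoidAlgebra R Γ}

theorem leadingCoeff_eq_coeff [Nonempty Γ] {a : Γ} (h : deg f = a) : lc f = f.coeff a := by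
  rw [leadingCoeff, h, Function.leftInverse_invFun WithBot.coe_injective]

theorem supDegree_eq_bot_iff : deg f = ⊥ ↔ f = 0 := by
  refine ⟨fun h => ?_, fun h => h ▸ supDegree_zero⟩
  by_contra hf
  obtain ⟨a, -, ha⟩ := exists_supDegree_mem_support WithBot.some hf
  exact WithBot.coe_ne_bot (ha ▸ h)

theorem leadingTerm_add_of_supDegree_eq [AddZeroClass Γ] (hidem : ∀ a : R, a + a = a)
    (h : deg f = deg g) : deg (f + g) = deg f ∧ lc (f + g) = lc f + lc g := by
  rcases eq_or_ne f 0 with rfl | hf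
  · rw [supDegree_zero, eq_comm, supDegree_eq_bot_iff] at h
    simp [h]
  obtain ⟨a, -, ha⟩ := exists_supDegree_mem_support WithBot.some hf
  have hcoeff : (f + g).coeff a = lc f + lc g := by
    rw [coeff_add, Finsupp.add_apply, leadingCoeff_eq_coeff ha, leadingCoeff_eq_coeff (h ▸ ha)]
  have hne : (f + g).coeff a ≠ 0 := by
    rw [hcoeff, Ne, add_eq_zero_iff_of_add_self hidem, leadingCoeff_eq_zero WithBot.coe_injective]
    exact fun h' => hf h'.1
  have hdeg : deg (f + g) = a :=
    le_antisymm (supDegree_add_le.trans (by rw [← h, sup_idem, ha]))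
      (Finset.le_sup (Finsupp.mem_support_iff.2 hne))
  exact ⟨hdeg.trans ha.symm, by rw [leadingCoeff_eq_coeff hdeg, hcoeff]⟩

theorem supDegree_mapDomain (hidem : ∀ a : R, a + a = a) {Γ' : Type*} [LinearOrder Γ']
    {τ : Γ → Γ'} (hτ : Monotone τ) (f : AddMonoidAlgebra R Γ) :
    deg (mapDomain τ f) = (deg f).map τ := by
  classical
  rcases eq_or_ne f 0 with rfl | hf
  · simp
  obtain ⟨a, ha, hfa⟩ := exists_supDegree_mem_support WithBot.some hf
  rw [hfa, WithBot.map_coe]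
  refine le_antisymm (Finset.sup_le fun y hy => ?_) (Finset.le_sup (Finsupp.mem_support_iff.2 ?_))
  · obtain ⟨x, hx, rfl⟩ := Finset.mem_image.1 (Finsupp.mapDomain_support hy)
    exact WithBot.coe_le_coe.2 (hτ (WithBot.coe_le_coe.1 (hfa ▸ Finset.le_sup hx)))
  · rw [coeff_mapDomain, Finsupp.mapDomain, Finsupp.sum_apply, Finsupp.sum,
      ← Finset.add_sum_erase _ _ ha, Finsupp.single_eq_same, Ne, add_eq_zero_iff_of_add_self hidem]
    exact fun h => Finsupp.mem_support_iff.1 ha h.1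

end LinearOrder

theorem leadingTerm_mul {R Γ : Type*} [Semiring R] [NoZeroDivisors R] [AddCommMonoid Γ]
    [LinearOrder Γ] [IsOrderedCancelAddMonoid Γ] (f g : AddMonoidAlgebra R Γ) :
    deg (f * g) = deg f + deg g ∧ lc (f * g) = lc f * lc g := by
  rcases eq_or_ne f 0 with rfl | hf
  · simp
  rcases eq_or_ne g 0 with rfl | hg
  · simp
  obtain ⟨a, ha, hfa⟩ := exists_supDegree_mem_support WithBot.some hf
  obtain ⟨b, hb, hgb⟩ := exists_supDegree_mem_support WithBot.some hg
  have hmax {h : AddMonoidAlgebra R Γ} {x} (hx : x ∈ h.coeff.support) : (x : WithBot Γ) ≤ deg h :=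
    Finset.le_sup hx
  have huniq : UniqueAdd f.coeff.support g.coeff.support a b := by
    intro x y hx hy hxy
    have hxa : x ≤ a := WithBot.coe_le_coe.1 (hfa ▸ hmax hx)
    have hyb : y ≤ b := WithBot.coe_le_coe.1 (hgb ▸ hmax hy)
    obtain rfl : x = a := hxa.eq_or_lt.resolve_right fun h => (add_lt_add_of_lt_of_le h hyb).ne hxy
    exact ⟨rfl, add_left_cancel hxy⟩
  have hcoeff : (f * g).coeff (a + b) = lc f * lc g := by
    rw [coeff_mul_add_of_uniqueAdd huniq, leadingCoeff_eq_coeff hfa, leadingCoeff_eq_coeff hgb]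
  have hdeg : deg (f * g) = ↑(a + b) := by
    refine le_antisymm ?_ (hmax (Finsupp.mem_support_iff.2 ?_))
    · exact (supDegree_mul_le fun _ _ => WithBot.coe_add _ _).trans
        (by rw [hfa, hgb, WithBot.coe_add])
    · rw [hcoeff]
      exact mul_ne_zero ((leadingCoeff_ne_zero WithBot.coe_injective).2 hf)
        ((leadingCoeff_ne_zero WithBot.coe_injective).2 hg)
  exact ⟨by rw [hdeg, hfa, hgb, WithBot.coe_add], by rw [leadingCoeff_eq_coeff hdeg, hcoeff]⟩

end AddMonoidAlgebra

section LeadingTermCon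

variable {F Γ : Type*} [Semifield F] [AddCommMonoid Γ] [LinearOrder Γ] [IsOrderedCancelAddMonoid Γ]

def isZeroCon (hidem : ∀ a : F, a + a = a) : RingCon F where
  r a b := a = 0 ↔ b = 0
  iseqv := ⟨fun _ => Iff.rfl, Iff.symm, Iff.trans⟩
  add' h₁ h₂ := by simp only [add_eq_zero_iff_of_add_self hidem, h₁, h₂]
  mul' h₁ h₂ := by simp only [mul_eq_zero, h₁, h₂]

theorem isZeroCon_isPrimeCon (hidem : ∀ a : F, a + a = a) : IsPrimeCon (isZeroCon hidem) := by
  refine .of_total_of_cancel (by simp [isZeroCon]) (fun a b => ?_) (fun a b t h => ?_)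
  · by_cases ha : a = 0 <;> simp [isZeroCon, add_eq_zero_iff_of_add_self hidem, ha]
  · by_cases ht : t = 0 <;> simp_all [isZeroCon]

def leadingTermCon (hidem : ∀ a : F, a + a = a) (q : RingCon F) :
    RingCon (AddMonoidAlgebra F Γ) where
  r f g := deg f = deg g ∧ q (lc f) (lc g)
  iseqv := ⟨fun _ => ⟨rfl, q.refl _⟩, fun h => ⟨h.1.symm, q.symm h.2⟩,
    fun h₁ h₂ => ⟨h₁.1.trans h₂.1, q.trans h₁.2 h₂.2⟩⟩
  add' := by
    intro f g h k ⟨hfg, qfg⟩ ⟨hhk, qhk⟩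
    rcases lt_trichotomy (deg h) (deg f) with hlt | heq | hgt
    · have hlt' : deg k < deg g := hhk ▸ hfg ▸ hlt
      rw [supDegree_add_eq_left hlt, supDegree_add_eq_left hlt', leadingCoeff_add_eq_left hlt,
        leadingCoeff_add_eq_left hlt']
      exact ⟨hfg, qfg⟩
    · obtain ⟨d₁, l₁⟩ := leadingTerm_add_of_supDegree_eq hidem heq.symm
      obtain ⟨d₂, l₂⟩ := leadingTerm_add_of_supDegree_eq hidem (hfg ▸ hhk ▸ heq).symm
      rw [d₁, d₂, l₁, l₂]
      exact ⟨hfg, q.add qfg qhk⟩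
    · have hgt' : deg g < deg k := hhk ▸ hfg ▸ hgt
      rw [supDegree_add_eq_right hgt, supDegree_add_eq_right hgt', leadingCoeff_add_eq_right hgt,
        leadingCoeff_add_eq_right hgt']
      exact ⟨hhk, qhk⟩
  mul' := by
    intro f g h k ⟨hfg, qfg⟩ ⟨hhk, qhk⟩
    rw [(leadingTerm_mul f h).1, (leadingTerm_mul g k).1, (leadingTerm_mul f h).2,
      (leadingTerm_mul g k).2]
    exact ⟨by rw [hfg, hhk], q.mul qfg qhk⟩

variable {hidem : ∀ a : F, a + a = a} {q q' : RingCon F}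

theorem leadingTermCon_iff {f g : AddMonoidAlgebra F Γ} :
    leadingTermCon hidem q f g ↔ deg f = deg g ∧ q (lc f) (lc g) := Iff.rfl

theorem leadingTermCon_isPrimeCon (hq : IsPrimeCon q) :
    IsPrimeCon (leadingTermCon hidem q : RingCon (AddMonoidAlgebra F Γ)) := by
  refine .of_total_of_cancel (fun h => ?_) (fun f g => ?_) (fun f g t h => ?_)
  · simpa [one_def, supDegree_single] using h.1
  · rcases lt_trichotomy (deg g) (deg f) with hlt | heq | hgt
    · exact .inl ⟨supDegree_add_eq_left hlt, by rw [leadingCoeff_add_eq_left hlt]; exact q.refl _⟩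
    · obtain ⟨d, l⟩ := leadingTerm_add_of_supDegree_eq hidem heq.symm
      rcases hq.rel_add_or_rel_add hidem (lc f) (lc g) with h | h
      · exact .inl ⟨d, l ▸ h⟩
      · exact .inr ⟨d.trans heq.symm, l ▸ h⟩
    · exact .inr ⟨supDegree_add_eq_right hgt, by rw [leadingCoeff_add_eq_right hgt]; exact q.refl _⟩
  · rcases eq_or_ne t 0 with rfl | ht
    · exact .inr ((leadingTermCon hidem q).refl 0)
    rw [leadingTermCon_iff, (leadingTerm_mul f t).1, (leadingTerm_mul g t).1,
      (leadingTerm_mul f t).2, (leadingTerm_mul g t).2] at h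
    refine .inl ⟨WithBot.add_right_cancel (mt supDegree_eq_bot_iff.1 ht) h.1,
      (hq.rel_or_rel_zero_of_mul_rel_mul h.2).resolve_right fun h0 => ht ?_⟩
    exact (leadingCoeff_eq_zero WithBot.coe_injective).1 (hq.eq_zero_of_rel_zero h0)

theorem leadingTermCon_mono (h : q ≤ q') :
    (leadingTermCon hidem q : RingCon (AddMonoidAlgebra F Γ)) ≤ leadingTermCon hidem q' :=
  fun _ _ hfg => ⟨hfg.1, h hfg.2⟩

theorem leadingTermCon_single_zero_iff {a b : F} :
    (leadingTermCon hidem q : RingCon (AddMonoidAlgebra F Γ)) (single 0 a) (single 0 b) ↔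
      (a = 0 ↔ b = 0) ∧ q a b := by
  rw [leadingTermCon_iff, supDegree_single, supDegree_single,
    leadingCoeff_single WithBot.coe_injective, leadingCoeff_single WithBot.coe_injective]
  split_ifs <;> simp_all

theorem leadingTermCon_isZeroCon_iff {f g : AddMonoidAlgebra F Γ} :
    leadingTermCon hidem (isZeroCon hidem) f g ↔ deg f = deg g := by
  refine ⟨And.left, fun h => ⟨h, ?_⟩⟩
  show lc f = 0 ↔ lc g = 0
  rw [leadingCoeff_eq_zero WithBot.coe_injective, leadingCoeff_eq_zero WithBot.coe_injective,
    ← supDegree_eq_bot_iff, ← supDegree_eq_bot_iff (f := g), h]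

theorem leadingTermCon_le_comap_mapDomain {Γ' : Type*} [AddCommMonoid Γ'] [LinearOrder Γ']
    [IsOrderedCancelAddMonoid Γ'] (τ : Γ →+ Γ') (hτ : Monotone τ) :
    (leadingTermCon hidem q : RingCon (AddMonoidAlgebra F Γ)) ≤
      (leadingTermCon hidem (isZeroCon hidem)).comap (mapDomainRingHom F τ) := by
  intro f g h
  show leadingTermCon hidem (isZeroCon hidem) (mapDomain τ f) (mapDomain τ g)
  rw [leadingTermCon_isZeroCon_iff, supDegree_mapDomain hidem hτ, supDegree_mapDomain hidem hτ,
    h.1]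

end LeadingTermCon

section LexTrunc

variable (n : ℕ)

noncomputable def lexTrunc (j : ℕ) : Lex (Fin n →₀ ℤ) →+ Lex (Fin n →₀ ℤ) :=
  (toLexAddEquiv _).toAddMonoidHom.comp
    ((Finsupp.filterAddHom fun i : Fin n => (i : ℕ) < j).comp (ofLexAddEquiv _).toAddMonoidHom)

variable {n}

theorem lexTrunc_apply (j : ℕ) (u : Lex (Fin n →₀ ℤ)) (i : Fin n) :
    ofLex (lexTrunc n j u) i = if (i : ℕ) < j then ofLex u i else 0 :=
  Finsupp.filter_apply _ _ _

theorem monotone_lexTrunc (j : ℕ) : Monotone (lexTrunc n j) := by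
  intro x y hxy
  rcases hxy.lt_or_eq with hlt | rfl
  · obtain ⟨i, hi, hlt⟩ := Finsupp.Lex.lt_iff.1 hlt
    by_cases hij : (i : ℕ) < j
    · refine (Finsupp.Lex.lt_iff.2 ⟨i, fun k hk => ?_, ?_⟩).le
      · simp only [lexTrunc_apply, hi k hk]
      · simpa only [lexTrunc_apply, if_pos hij]
    · refine le_of_eq (congrArg toLex (Finsupp.ext fun k => ?_))
      show ofLex (lexTrunc n j x) k = ofLex (lexTrunc n j y) k
      simp only [lexTrunc_apply]
      split_ifs with hkj
      · exact hi k (by omega)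
      · rfl
  · rfl

theorem lexTrunc_comp_lexTrunc {j j' : ℕ} (h : j' ≤ j) :
    (lexTrunc n j').comp (lexTrunc n j) = lexTrunc n j' := by
  ext u : 1
  refine congrArg toLex (Finsupp.ext fun k => ?_)
  show ofLex (lexTrunc n j' (lexTrunc n j u)) k = ofLex (lexTrunc n j' u) k
  simp only [lexTrunc_apply]
  split_ifs <;> first | rfl | omega

end LexTrunc

section Levels

variable {F : Type*} [Semifield F] (hidem : ∀ a : F, a + a = a) (n : ℕ)

noncomputable def levelMap (j : ℕ) :
    AddMonoidAlgebra F (Fin n →₀ ℤ) →+* AddMonoidAlgebra F (Lex (Fin n →₀ ℤ)) :=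
  mapDomainRingHom F ((lexTrunc n j).comp (toLexAddEquiv _).toAddMonoidHom)

/-- Leading terms modulo `q` for the lexicographic order on the first `j` exponents. -/
noncomputable def levelCon (j : ℕ) (q : RingCon F) : RingCon (AddMonoidAlgebra F (Fin n →₀ ℤ)) :=
  (leadingTermCon hidem q).comap (levelMap n j)

variable {hidem n} {q q' : RingCon F}

theorem levelMap_single (j : ℕ) (u : Fin n →₀ ℤ) (a : F) :
    levelMap n j (single u a) = single (lexTrunc n j (toLex u)) a :=
  mapDomain_single

theorem levelMap_eq_comp (j : ℕ) :
    (levelMap n j : AddMonoidAlgebra F (Fin n →₀ ℤ) →+* _) =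
      (mapDomainRingHom F (lexTrunc n j)).comp (levelMap n (j + 1)) := by
  rw [levelMap, levelMap, ← mapDomainRingHom_comp]
  congr 1
  exact AddMonoidHom.ext fun u =>
    (DFunLike.congr_fun (lexTrunc_comp_lexTrunc (Nat.le_succ j)) _).symm

theorem levelCon_isPrimeCon (j : ℕ) (hq : IsPrimeCon q) : IsPrimeCon (levelCon hidem n j q) :=
  (leadingTermCon_isPrimeCon hq).comap _

theorem levelCon_lt_levelCon (j : ℕ) (hq' : IsPrimeCon q') (h : q < q') :
    levelCon hidem n j q < levelCon hidem n j q' := by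
  refine lt_of_le_not_ge (fun f g hfg => leadingTermCon_mono (hidem := hidem) h.le hfg)
    fun hle => ?_
  obtain ⟨a, b, hab, hnab⟩ := RingCon.exists_rel_not_rel_of_lt h
  have hconst {r : RingCon F} :
      levelCon hidem n j r (single 0 a) (single 0 b) ↔ (a = 0 ↔ b = 0) ∧ r a b := by
    show leadingTermCon hidem r (levelMap n j _) (levelMap n j _) ↔ _
    rw [levelMap_single, levelMap_single, toLex_zero, map_zero, leadingTermCon_single_zero_iff]
  exact hnab (hconst.1 (hle (hconst.2 ⟨hq'.eq_zero_iff_of_rel hab, hab⟩))).2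

theorem levelCon_succ_lt (j : ℕ) (hj : j < n) (q : RingCon F) :
    levelCon hidem n (j + 1) q < levelCon hidem n j (isZeroCon hidem) := by
  refine lt_of_le_not_ge (fun f g hfg => ?_) fun hle => ?_
  · show leadingTermCon hidem _ (levelMap n j f) (levelMap n j g)
    rw [levelMap_eq_comp]
    exact leadingTermCon_le_comap_mapDomain _ (monotone_lexTrunc j) hfg
  -- `x_j` is identified with `1` at level `j` but not at level `j + 1`
  set e : Fin n →₀ ℤ := Finsupp.single ⟨j, hj⟩ 1
  have he (i : Fin n) : e i = if (i : ℕ) = j then 1 else 0 := by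
    simp [e, Finsupp.single_apply, Fin.ext_iff, eq_comm]
  have hj₀ : lexTrunc n j (toLex e) = 0 := by
    refine congrArg toLex (Finsupp.ext fun i => ?_)
    show ofLex (lexTrunc n j (toLex e)) i = 0
    rw [lexTrunc_apply, ofLex_toLex, he]
    split_ifs <;> first | rfl | omega
  have hj₁ : lexTrunc n (j + 1) (toLex e) = toLex e := by
    refine congrArg toLex (Finsupp.ext fun i => ?_)
    show ofLex (lexTrunc n (j + 1) (toLex e)) i = e i
    rw [lexTrunc_apply, ofLex_toLex, he]
    split_ifs <;> first | rfl | omega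
  have h₁ : levelCon hidem n j (isZeroCon hidem) (single e 1) 1 := by
    show leadingTermCon hidem _ (levelMap n j _) (levelMap n j 1)
    rw [levelMap_single, map_one, one_def, hj₀]
    exact (leadingTermCon hidem _).refl _
  have h₂ := (hle h₁).1
  rw [levelMap_single, map_one, one_def, hj₁, supDegree_single, supDegree_single,
    if_neg one_ne_zero, if_neg one_ne_zero, WithBot.coe_inj] at h₂
  exact one_ne_zero (Finsupp.single_eq_zero.1 (toLex_eq_zero.1 h₂))

end Levels

section KrullDim

variable {A : Type*} [CommSemiring A] {d : ℕ}

theorem HasKrullDim.length_le (h : HasKrullDim A d) (p : LTSeries (RingCon A))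
    (hp : ∀ x ∈ p, IsPrimeCon x) : p.length ≤ d :=
  h.2 _ p p.strictMono fun i => hp _ ⟨i, rfl⟩

theorem hasKrullDim_of_ltSeries (p : LTSeries (RingCon A)) (hlen : p.length = d)
    (hp : ∀ x ∈ p, IsPrimeCon x)
    (hmax : ∀ p' : LTSeries (RingCon A), (∀ x ∈ p', IsPrimeCon x) → p'.length ≤ d) :
    HasKrullDim A d := by
  subst hlen
  exact ⟨⟨p.toFun, p.strictMono, fun i => hp _ ⟨i, rfl⟩⟩,
    fun m c hc hprime => hmax (LTSeries.mk m c hc) fun _ ⟨i, hi⟩ => hi ▸ hprime i⟩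

end KrullDim

theorem exists_ltSeries_levelCon {F : Type*} [Semifield F] (hidem : ∀ a : F, a + a = a)
    {n d : ℕ} (hd : HasKrullDim F d) :
    ∀ k ≤ n, ∃ p : LTSeries (RingCon (AddMonoidAlgebra F (Fin n →₀ ℤ))), p.length = d + k ∧
      (∀ x ∈ p, IsPrimeCon x) ∧ ∃ q, p.last = levelCon hidem n (n - k) q := by
  intro k hk
  induction k with
  | zero =>
    obtain ⟨c, hc, hprime⟩ := hd.1
    exact ⟨LTSeries.mk d (fun i => levelCon hidem n n (c i))
      (fun i j hij => levelCon_lt_levelCon n (hprime j) (hc hij)), rfl,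
      fun _ ⟨i, hi⟩ => hi ▸ levelCon_isPrimeCon n (hprime i), c (Fin.last d), rfl⟩
  | succ k ih =>
    obtain ⟨p, hlen, hprime, q, hlast⟩ := ih (by omega)
    have hlt : p.last < levelCon hidem n (n - (k + 1)) (isZeroCon hidem) := by
      rw [hlast, show n - k = n - (k + 1) + 1 by omega]
      exact levelCon_succ_lt _ (by omega) q
    refine ⟨p.snoc _ hlt, by simp [hlen, add_assoc], fun x hx => ?_, _, RelSeries.last_snoc _ _ _⟩
    rcases RelSeries.mem_snoc.1 hx with hx | rfl
    · exact hprime x hx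
    · exact levelCon_isPrimeCon _ (isZeroCon_isPrimeCon hidem)

section Exponents

variable {F G : Type*} [Semifield F] [AddCommGroup G] {P Q : RingCon (AddMonoidAlgebra F G)}

theorem AddMonoidAlgebra.add_self_of_add_self (hidem : ∀ a : F, a + a = a)
    (f : AddMonoidAlgebra F G) : f + f = f := by
  ext u
  simp [hidem]

theorem single_mul_single_neg_inv {c : F} (hc : c ≠ 0) (u : G) :
    single u c * single (-u) c⁻¹ = (1 : AddMonoidAlgebra F G) := by
  rw [single_mul_single, add_neg_cancel, mul_inv_cancel₀ hc, one_def]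

theorem RingCon.rel_mul_single_iff {c : F} (hc : c ≠ 0) (u : G) {f g : AddMonoidAlgebra F G} :
    P (f * single u c) (g * single u c) ↔ P f g :=
  ⟨fun h => by
    simpa [mul_assoc, single_mul_single_neg_inv hc] using P.mul h (P.refl (single (-u) c⁻¹)),
    fun h => P.mul h (P.refl _)⟩

theorem RingCon.rel_single_iff_rel_single_zero (u : G) {a b : F} :
    P (single u a) (single u b) ↔ P (single 0 a) (single 0 b) := by
  rw [← P.rel_mul_single_iff one_ne_zero u (f := single 0 a)]
  simp [single_mul_single]

theorem IsPrimeCon.eq_zero_of_single_rel_zero (hP : IsPrimeCon P) {u : G} {c : F}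
    (h : P (single u c) 0) : c = 0 := by
  by_contra hc
  rw [← P.rel_mul_single_iff (inv_ne_zero hc) (-u), single_mul_single_neg_inv hc, zero_mul] at h
  exact hP.not_rel_zero_one (P.symm h)

theorem IsPrimeCon.exists_rel_single (hidem : ∀ a : F, a + a = a) (hP : IsPrimeCon P)
    (f : AddMonoidAlgebra F G) : ∃ u c, P f (single u c) := by
  induction f using AddMonoidAlgebra.induction_linear with
  | zero => exact ⟨0, 0, by rw [single_zero]; exact P.refl 0⟩
  | add f g hf hg =>
    obtain ⟨u, c, hf⟩ := hf
    obtain ⟨v, d, hg⟩ := hg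
    rcases hP.rel_add_or_rel_add (add_self_of_add_self hidem) (single u c) (single v d) with h | h
    · exact ⟨u, c, P.trans (P.add hf hg) h⟩
    · exact ⟨v, d, P.trans (P.add hf hg) h⟩
  | single u c => exact ⟨u, c, P.refl _⟩

variable (P) in
def constExponents : AddSubgroup G where
  carrier := {w | ∃ e : F, e ≠ 0 ∧ P (single w e) 1}
  zero_mem' := ⟨1, one_ne_zero, by rw [← one_def]; exact P.refl 1⟩
  add_mem' := by
    rintro w w' ⟨e, he, h⟩ ⟨e', he', h'⟩
    exact ⟨e * e', mul_ne_zero he he', by simpa [single_mul_single] using P.mul h h'⟩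
  neg_mem' := by
    rintro w ⟨e, he, h⟩
    refine ⟨e⁻¹, inv_ne_zero he, P.symm ?_⟩
    simpa [single_mul_single_neg_inv he] using P.mul h (P.refl (single (-w) e⁻¹))

theorem constExponents_mono (h : P ≤ Q) : constExponents P ≤ constExponents Q :=
  fun _ ⟨e, he, hw⟩ => ⟨e, he, h hw⟩

theorem exists_mem_constExponents_not_mem (hidem : ∀ a : F, a + a = a) (hP : IsPrimeCon P)
    (hQ : IsPrimeCon Q) (hlt : P < Q)
    (hres : Q.comap singleZeroRingHom ≤ P.comap singleZeroRingHom) :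
    ∃ w ∈ constExponents Q, w ∉ constExponents P := by
  obtain ⟨f, g, hQfg, hPfg⟩ := RingCon.exists_rel_not_rel_of_lt hlt
  obtain ⟨u, c, hf⟩ := hP.exists_rel_single hidem f
  obtain ⟨v, d, hg⟩ := hP.exists_rel_single hidem g
  have hQ' : Q (single u c) (single v d) :=
    Q.trans (Q.symm (hlt.le hf)) (Q.trans hQfg (hlt.le hg))
  have hP' : ¬ P (single u c) (single v d) := fun h => hPfg (P.trans hf (P.trans h (P.symm hg)))
  have hd : d ≠ 0 := by
    rintro rfl
    rw [single_zero] at hQ' hP'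
    exact hP' (by rw [hQ.eq_zero_of_single_rel_zero hQ', single_zero]; exact P.refl 0)
  -- dividing by the unit `d x^v` turns the pair into `(c / d) x^(u - v)` and `1`
  rw [← Q.rel_mul_single_iff (inv_ne_zero hd) (-v), single_mul_single_neg_inv hd,
    single_mul_single, ← sub_eq_add_neg] at hQ'
  rw [← P.rel_mul_single_iff (inv_ne_zero hd) (-v), single_mul_single_neg_inv hd,
    single_mul_single, ← sub_eq_add_neg] at hP'
  have hk : c * d⁻¹ ≠ 0 := fun hk => hQ.not_rel_zero_one (by rwa [hk, single_zero] at hQ')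
  refine ⟨u - v, ⟨_, hk, hQ'⟩, fun ⟨e, he, hPe⟩ => hP' (P.trans ?_ hPe)⟩
  have hQe : Q (single (u - v) (c * d⁻¹)) (single (u - v) e) := Q.trans hQ' (Q.symm (hlt.le hPe))
  rw [Q.rel_single_iff_rel_single_zero] at hQe
  rw [P.rel_single_iff_rel_single_zero]
  exact hres hQe

theorem mem_constExponents_of_zsmul_mem (hidem : ∀ a : F, a + a = a) (hP : IsPrimeCon P)
    (hle : P ≤ Q) (hres : Q.comap singleZeroRingHom ≤ P.comap singleZeroRingHom) {w : G}
    {z : ℤ} (hz : z ≠ 0) (hwQ : w ∈ constExponents Q) (hzw : z • w ∈ constExponents P) :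
    w ∈ constExponents P := by
  obtain ⟨e, he, hQw⟩ := hwQ
  set m := z.natAbs
  have hmw : m • w ∈ constExponents P := by
    rcases Int.natAbs_eq z with h | h <;> rw [h] at hzw <;>
      simpa only [neg_smul, natCast_zsmul, neg_mem_iff] using hzw
  obtain ⟨c, -, hPm⟩ := hmw
  have hQm : Q (single (m • w) c) (single (m • w) (e ^ m)) := by
    refine Q.trans (hle hPm) (Q.symm ?_)
    simpa [single_pow] using Q.toCon.pow m hQw
  rw [Q.rel_single_iff_rel_single_zero] at hQm
  have hPm' : P (single 0 c) (single 0 (e ^ m)) := hres hQm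
  rw [← P.rel_single_iff_rel_single_zero (m • w)] at hPm'
  refine ⟨e, he,
    hP.rel_one_of_pow_rel_one (add_self_of_add_self hidem) (Int.natAbs_ne_zero.2 hz) ?_⟩
  simpa [single_pow] using P.trans (P.symm hPm') hPm

theorem exists_linearIndependent_finCons (hidem : ∀ a : F, a + a = a) (hP : IsPrimeCon P)
    (hQ : IsPrimeCon Q) (hlt : P < Q)
    (hres : Q.comap singleZeroRingHom = P.comap singleZeroRingHom) {b : ℕ} {v : Fin b → G}
    (hv : LinearIndependent ℤ v) (hvP : ∀ i, v i ∈ constExponents P) :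
    ∃ w ∈ constExponents Q, LinearIndependent ℤ (Fin.cons w v : Fin (b + 1) → G) := by
  obtain ⟨w, hwQ, hwP⟩ := exists_mem_constExponents_not_mem hidem hP hQ hlt hres.le
  refine ⟨w, hwQ, hv.finCons' w v fun z y hy hzy => ?_⟩
  by_contra hz
  have hy' : y ∈ constExponents P :=
    Submodule.span_le (p := (constExponents P).toIntSubmodule).2 (Set.range_subset_iff.2 hvP) hy
  refine hwP (mem_constExponents_of_zsmul_mem hidem hP hlt.le hres.le hz hwQ ?_)
  rw [eq_neg_of_add_eq_zero_left hzy]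
  exact neg_mem hy'

theorem exists_ltSeries_linearIndependent (hidem : ∀ a : F, a + a = a)
    (p : LTSeries (RingCon (AddMonoidAlgebra F G))) (hp : ∀ x ∈ p, IsPrimeCon x) :
    ∃ c : LTSeries (RingCon F), (∀ x ∈ c, IsPrimeCon x) ∧
      c.last = p.last.comap singleZeroRingHom ∧
      ∃ (b : ℕ) (v : Fin b → G), LinearIndependent ℤ v ∧ (∀ i, v i ∈ constExponents p.last) ∧
        p.length = c.length + b := by
  induction p using RelSeries.inductionOn' with
  | singleton P =>
    refine ⟨RelSeries.singleton _ (P.comap singleZeroRingHom), ?_, rfl, 0, Fin.elim0,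
      linearIndependent_empty_type, fun i => i.elim0, rfl⟩
    rintro _ ⟨i, rfl⟩
    exact (hp P ⟨0, rfl⟩).comap _
  | snoc p Q hPQ ih =>
    replace hPQ : p.last < Q := hPQ
    have hP : IsPrimeCon p.last := hp _ (RelSeries.mem_snoc.2 (.inl p.last_mem))
    have hQ : IsPrimeCon Q := hp _ (RelSeries.mem_snoc.2 (.inr rfl))
    obtain ⟨c, hc, hlast, b, v, hv, hvK, hlen⟩ :=
      ih fun x hx => hp x (RelSeries.mem_snoc.2 (.inl hx))
    simp only [RelSeries.last_snoc, RelSeries.snoc_length]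
    have hvK' (i : Fin b) : v i ∈ constExponents Q := constExponents_mono hPQ.le (hvK i)
    by_cases hres : Q.comap singleZeroRingHom = p.last.comap singleZeroRingHom
    · obtain ⟨w, hwQ, hw⟩ := exists_linearIndependent_finCons hidem hP hQ hPQ hres hv hvK
      exact ⟨c, hc, hlast.trans hres.symm, b + 1, Fin.cons w v, hw, Fin.cases hwQ hvK', by omega⟩
    · have hlt : c.last < Q.comap singleZeroRingHom :=
        hlast ▸ lt_of_le_of_ne (fun {_ _} h => hPQ.le h) (Ne.symm hres)
      refine ⟨c.snoc _ hlt, fun x hx => ?_, RelSeries.last_snoc _ _ _, b, v, hv, hvK', ?_⟩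
      · rcases RelSeries.mem_snoc.1 hx with hx | rfl
        · exact hc x hx
        · exact hQ.comap _
      · simp only [RelSeries.snoc_length]
        omega

theorem length_le_add_finrank (hidem : ∀ a : F, a + a = a) [Module.Finite ℤ G] {d : ℕ}
    (hd : HasKrullDim F d) (p : LTSeries (RingCon (AddMonoidAlgebra F G)))
    (hp : ∀ x ∈ p, IsPrimeCon x) : p.length ≤ d + Module.finrank ℤ G := by
  obtain ⟨c, hc, -, b, v, hv, -, hlen⟩ := exists_ltSeries_linearIndependent hidem p hp
  have hb := hv.fintype_card_le_finrank
  rw [Fintype.card_fin] at hb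
  have := hd.length_le c hc
  omega

end Exponents

theorem stmt_11_general (F : Type*) [Semifield F] (hidem : ∀ a : F, a + a = a)
    (n : ℕ) (d : ℕ) (hd : HasKrullDim F d) :
    HasKrullDim (AddMonoidAlgebra F (Fin n →₀ ℤ)) (d + n) := by
  obtain ⟨p, hlen, hp, -⟩ := exists_ltSeries_levelCon hidem hd n le_rfl
  refine hasKrullDim_of_ltSeries p hlen hp fun p' hp' => ?_
  simpa using length_le_add_finrank hidem hd p' hp'

/-- For an additively idempotent semifield `F`,
`dim F(x₁, …, xₙ) = dim F + n`. -/
theorem stmt_11 (F : Type*) [Semifield F] (hidem : ∀ a : F, a + a = a)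
    (n : ℕ) (hn : 1 ≤ n) (d : ℕ) (hd : HasKrullDim F d) :
    HasKrullDim (AddMonoidAlgebra F (Fin n →₀ ℤ)) (d + n) :=
  stmt_11_general F hidem n d hd
end

section
/- Let R be a cancellative commutative semiring and C a quotient-cancellative congruence of R with trivial kernel. Then the restriction to R of the congruence generated by C in Frac(R) equals C; moreover, for any congruence Q of Frac(R), the congruence generated in Frac(R) by the restriction Q ∩ (R × R) equals Q. -/
/-!
Relating `r/s` to `p/t` iff `C (r * t) (p * s)` defines a congruence of `Frac R`; it contains
the congruence generated by `C` and restricts to `C` on `R`, which gives the first part.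
Transitivity of this relation is where quotient-cancellativity and the trivial kernel enter:
together they let one cancel a nonzero common factor inside `C`. Conversely, any congruence `Q`
of `Frac R` is generated by its restriction to `R`, because `Q x y` can be multiplied by a
common denominator of `x` and `y` and then divided again.
-/

theorem mul_eq_mul_of_map_div_eq_map_div {R F : Type*} [Semiring R] [Semifield F] {f : R →+* F}
    (hinj : Function.Injective f) {r s p t : R} (hs : s ≠ 0) (ht : t ≠ 0)
    (h : f r / f s = f p / f t) : r * t = p * s := by
  have := mul_eq_mul_of_div_eq_div _ _ ((map_ne_zero_iff f hinj).2 hs)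
    ((map_ne_zero_iff f hinj).2 ht) h
  exact hinj (by simpa only [map_mul] using this)

namespace RingCon

variable {R : Type*} [CommSemiring R]

theorem rel_of_mul_left_rel (C : RingCon R)
    (hQC : ∀ x a b : R, C (x * a) (x * b) → C x 0 ∨ C a b) (hker : ∀ a : R, C a 0 → a = 0)
    {s a b : R} (hs : s ≠ 0) (h : C (s * a) (s * b)) : C a b :=
  (hQC s a b h).resolve_left fun hs0 => hs (hker s hs0)

variable {F : Type*} [Semifield F] (f : R →+* F)

def fracRel (C : RingCon R) (x y : F) : Prop :=
  ∃ r s p t : R, s ≠ 0 ∧ t ≠ 0 ∧ x = f r / f s ∧ y = f p / f t ∧ C (r * t) (p * s)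

variable {f} {C : RingCon R}

theorem fracRel_refl (hfrac : ∀ x : F, ∃ r s : R, s ≠ 0 ∧ x = f r / f s) (x : F) :
    fracRel f C x x := by
  obtain ⟨r, s, hs, rfl⟩ := hfrac x
  exact ⟨r, s, r, s, hs, hs, rfl, rfl, C.refl _⟩

theorem fracRel_symm {x y : F} : fracRel f C x y → fracRel f C y x := by
  rintro ⟨r, s, p, t, hs, ht, rfl, rfl, h⟩
  exact ⟨p, t, r, s, ht, hs, rfl, rfl, C.symm h⟩

theorem fracRel_trans [NoZeroDivisors R] (hinj : Function.Injective f)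
    (hcancel : ∀ {s a b : R}, s ≠ 0 → C (s * a) (s * b) → C a b) {x y z : F} :
    fracRel f C x y → fracRel f C y z → fracRel f C x z := by
  rintro ⟨r, s, p, t, hs, ht, rfl, hy, h₁⟩ ⟨p', t', q, u, ht', hu, hy', rfl, h₂⟩
  have hp : p * t' = p' * t := mul_eq_mul_of_map_div_eq_map_div hinj ht ht' (hy.symm.trans hy')
  refine ⟨r, s, q, u, hs, hu, rfl, rfl, hcancel (mul_ne_zero ht ht') ?_⟩
  have h₁' := C.mul h₁ (C.refl (t' * u))
  have h₂' := C.mul h₂ (C.refl (t * s))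
  have e : p * s * (t' * u) = p' * u * (t * s) := by
    rw [show p * s * (t' * u) = p * t' * (s * u) by ring, hp]; ring
  rw [show t * t' * (r * u) = r * t * (t' * u) by ring,
    show t * t' * (q * s) = q * t' * (t * s) by ring]
  exact C.trans h₁' (e ▸ h₂')

theorem fracRel_add [NoZeroDivisors R] (hinj : Function.Injective f) {x y x' y' : F} :
    fracRel f C x y → fracRel f C x' y' → fracRel f C (x + x') (y + y') := by
  rintro ⟨r, s, p, t, hs, ht, rfl, rfl, h⟩ ⟨r', s', p', t', hs', ht', rfl, rfl, h'⟩
  have hf {a : R} (ha : a ≠ 0) : f a ≠ 0 := (map_ne_zero_iff f hinj).2 ha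
  refine ⟨r * s' + s * r', s * s', p * t' + t * p', t * t', mul_ne_zero hs hs',
    mul_ne_zero ht ht', ?_, ?_, ?_⟩
  · rw [div_add_div _ _ (hf hs) (hf hs')]; simp only [map_add, map_mul]
  · rw [div_add_div _ _ (hf ht) (hf ht')]; simp only [map_add, map_mul]
  · have := C.add (C.mul h (C.refl (s' * t'))) (C.mul h' (C.refl (s * t)))
    convert this using 1 <;> ring

theorem fracRel_mul [NoZeroDivisors R] {x y x' y' : F} :
    fracRel f C x y → fracRel f C x' y' → fracRel f C (x * x') (y * y') := by
  rintro ⟨r, s, p, t, hs, ht, rfl, rfl, h⟩ ⟨r', s', p', t', hs', ht', rfl, rfl, h'⟩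
  refine ⟨r * r', s * s', p * p', t * t', mul_ne_zero hs hs', mul_ne_zero ht ht', ?_, ?_, ?_⟩
  · rw [map_mul, map_mul, div_mul_div_comm]
  · rw [map_mul, map_mul, div_mul_div_comm]
  · convert C.mul h h' using 1 <;> ring

variable (f C) in
def fracCon [NoZeroDivisors R] (hinj : Function.Injective f)
    (hfrac : ∀ x : F, ∃ r s : R, s ≠ 0 ∧ x = f r / f s)
    (hcancel : ∀ {s a b : R}, s ≠ 0 → C (s * a) (s * b) → C a b) : RingCon F where
  r := fracRel f C
  iseqv := ⟨fracRel_refl hfrac, fracRel_symm, fracRel_trans hinj hcancel⟩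
  add' := fracRel_add hinj
  mul' := fracRel_mul

theorem fracRel_map_map [NoZeroDivisors R] (hinj : Function.Injective f)
    (hcancel : ∀ {s a b : R}, s ≠ 0 → C (s * a) (s * b) → C a b) {a b : R} :
    fracRel f C (f a) (f b) ↔ C a b := by
  have := f.domain_nontrivial
  constructor
  · rintro ⟨r, s, p, t, hs, ht, ha, hb, h⟩
    have hr : a * s = r := by
      simpa using mul_eq_mul_of_map_div_eq_map_div hinj one_ne_zero hs (by simpa using ha)
    have hp : b * t = p := by
      simpa using mul_eq_mul_of_map_div_eq_map_div hinj one_ne_zero ht (by simpa using hb)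
    subst hr hp
    exact hcancel (mul_ne_zero hs ht) (by convert h using 1 <;> ring)
  · intro h
    exact ⟨a, 1, b, 1, one_ne_zero, one_ne_zero, by simp, by simp, by simpa using h⟩

theorem ringConGen_restrict_eq (hinj : Function.Injective f)
    (hfrac : ∀ x : F, ∃ r s : R, s ≠ 0 ∧ x = f r / f s) (Q : RingCon F) :
    ringConGen (fun u v : F => ∃ p q : R, Q (f p) (f q) ∧ u = f p ∧ v = f q) = Q := by
  refine le_antisymm (ringConGen_le.2 fun _ _ ⟨p, q, h, hu, hv⟩ => hu ▸ hv ▸ h) ?_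
  intro x y hxy
  obtain ⟨r, s, hs, rfl⟩ := hfrac x
  obtain ⟨r', s', hs', rfl⟩ := hfrac y
  have hfs : f s ≠ 0 := (map_ne_zero_iff f hinj).2 hs
  have hfs' : f s' ≠ 0 := (map_ne_zero_iff f hinj).2 hs'
  have hx : f r / f s * (f s * f s') = f (r * s') := by
    rw [map_mul]; field_simp
  have hy : f r' / f s' * (f s * f s') = f (r' * s) := by
    rw [map_mul]; field_simp
  have hQ := Q.mul hxy (Q.refl (f s * f s'))
  rw [hx, hy] at hQ
  have hd : f s * f s' ≠ 0 := mul_ne_zero hfs hfs'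
  rw [← mul_inv_cancel_right₀ hd (f r / f s), ← mul_inv_cancel_right₀ hd (f r' / f s'), hx, hy]
  exact (ringConGen _).mul (RingConGen.Rel.of _ _ ⟨_, _, hQ, rfl, rfl⟩) ((ringConGen _).refl _)

end RingCon

open RingCon in
/-- For a quotient-cancellative congruence `C` with trivial kernel on a
cancellative commutative semiring `R`: the restriction to `R` of the congruence
generated by `C` in `Frac R` is `C`, and every congruence of `Frac R` is
generated by its restriction to `R`. -/
theorem stmt_14 (R F : Type*) [CommSemiring R] [Semifield F]
    (hcanc : ∀ a b c : R, a * b = a * c → a = 0 ∨ b = c)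
    (f : R →+* F) (hinj : Function.Injective f)
    (hfrac : ∀ x : F, ∃ r s : R, s ≠ 0 ∧ x = f r / f s)
    (C : RingCon R)
    (hQC : ∀ x a b : R, C (x * a) (x * b) → C x 0 ∨ C a b)
    (hker : ∀ a : R, C a 0 → a = 0) :
    (∀ a b : R,
      ringConGen (fun u v : F => ∃ p q : R, C p q ∧ u = f p ∧ v = f q)
        (f a) (f b) ↔ C a b) ∧
    ∀ Q : RingCon F,
      ringConGen (fun u v : F => ∃ p q : R, Q (f p) (f q) ∧ u = f p ∧ v = f q)
        = Q := by
  have : IsLeftCancelMulZero R := ⟨fun ha b c h => (hcanc _ b c h).resolve_left ha⟩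
  have hcancel {s a b : R} : s ≠ 0 → C (s * a) (s * b) → C a b := C.rel_of_mul_left_rel hQC hker
  refine ⟨fun a b => ⟨fun h => ?_, fun h => RingConGen.Rel.of _ _ ⟨a, b, h, rfl, rfl⟩⟩,
    ringConGen_restrict_eq hinj hfrac⟩
  have hle : ringConGen (fun u v : F => ∃ p q : R, C p q ∧ u = f p ∧ v = f q) ≤
      fracCon f C hinj hfrac hcancel :=
    ringConGen_le.2 fun _ _ ⟨p, q, hpq, hu, hv⟩ => hu ▸ hv ▸ (fracRel_map_map hinj hcancel).2 hpq
  exact (fracRel_map_map hinj hcancel).1 (hle h)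
end
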